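/- arXiv:astro-ph/0504067 — 5 statements merged into one kernel-verified Lean document; each statement's English description precedes it below -/
import Mathlib

section
/- For a prolate spheroid with semi-axes a < b (rotation axis b) and eccentricity e defined by e² = 1 - a²/b², the geometrical form-factor L₁ = ((1-e²)/e²)(-1 + (1/(2e))ln((1+e)/(1-e))) satisfies 0 < L₁ < 1/3. -/
/-!
Write `T = log ((1 + e) / (1 - e))`, so that `L₁ = (1 - e²)(T - 2e) / (2e³)`.
The series `T = 2 ∑ e^(2k+1) / (2k+1)` gives `T - 2e = 2 ∑_{k ≥ 0} e^(2k+3) / (2k+3)`, which is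
positive and, termwise, strictly below the geometric series `(2/3) ∑ e^(2k+3) = (2/3) e³ / (1 - e²)`.
These two bounds are exactly `0 < L₁` and `L₁ < 1/3`.
-/

open Real

theorem hasSum_log_sub_log_sub_two_mul {x : ℝ} (h : |x| < 1) :
    HasSum (fun k : ℕ => 2 / (2 * k + 3) * x ^ (2 * k + 3))
      (log (1 + x) - log (1 - x) - 2 * x) := by
  have key := (hasSum_nat_add_iff' 1).2 (hasSum_log_sub_log_of_abs_lt_one h)
  norm_num [add_assoc, mul_add] at key
  simpa only [div_eq_mul_inv] using key

theorem two_mul_lt_log_sub_log {x : ℝ} (hx₀ : 0 < x) (hx₁ : x < 1) :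
    2 * x < log (1 + x) - log (1 - x) := by
  have hx : |x| < 1 := abs_lt.2 ⟨by linarith, hx₁⟩
  have := hasSum_lt (f := fun _ => 0) (i := 0) (fun k => by positivity) (by norm_num; positivity)
    hasSum_zero (hasSum_log_sub_log_sub_two_mul hx)
  linarith

theorem log_sub_log_sub_two_mul_lt {x : ℝ} (hx₀ : 0 < x) (hx₁ : x < 1) :
    log (1 + x) - log (1 - x) - 2 * x < 2 / 3 * x ^ 3 / (1 - x ^ 2) := by
  have hx : |x| < 1 := abs_lt.2 ⟨by linarith, hx₁⟩
  have hx2 : x ^ 2 < 1 := by nlinarith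
  have geom : HasSum (fun k : ℕ => 2 / 3 * x ^ (2 * k + 3)) (2 / 3 * x ^ 3 / (1 - x ^ 2)) := by
    have key := (hasSum_geometric_of_lt_one (by positivity) hx2).mul_left (2 / 3 * x ^ 3)
    rw [← div_eq_mul_inv] at key
    simpa only [← pow_mul, ← pow_add, mul_assoc, add_comm] using key
  refine hasSum_lt (i := 1) (fun k => ?_) ?_ (hasSum_log_sub_log_sub_two_mul hx) geom
  · gcongr
    linarith [k.cast_nonneg (α := ℝ)]
  · norm_num
    gcongr
    norm_num

/-- For a prolate spheroid with semi-axes `a < b` (rotation axis `b`) and eccentricity `e`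
with `e² = 1 - a²/b²`, the form-factor
`L₁ = ((1-e²)/e²)(-1 + (1/(2e)) log((1+e)/(1-e)))` satisfies `0 < L₁ < 1/3`. -/
theorem prolate_form_factor_bounds (a b e : ℝ) (ha : 0 < a) (hab : a < b)
    (he_pos : 0 < e) (he : e ^ 2 = 1 - a ^ 2 / b ^ 2) :
    0 < (1 - e ^ 2) / e ^ 2 * (-1 + 1 / (2 * e) * Real.log ((1 + e) / (1 - e))) ∧
    (1 - e ^ 2) / e ^ 2 * (-1 + 1 / (2 * e) * Real.log ((1 + e) / (1 - e))) < 1 / 3 := by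
  have he_sq : 0 < 1 - e ^ 2 := by
    rw [he]
    have : 0 < a ^ 2 / b ^ 2 := by positivity [ha.trans hab]
    linarith
  have he_one : e < 1 := by nlinarith
  have hform : (1 - e ^ 2) / e ^ 2 * (-1 + 1 / (2 * e) * log ((1 + e) / (1 - e)))
      = (1 - e ^ 2) * (log (1 + e) - log (1 - e) - 2 * e) / (2 * e ^ 3) := by
    rw [log_div (by linarith) (by linarith)]
    field_simp
    ring
  have h_lower := two_mul_lt_log_sub_log he_pos he_one
  have h_upper := log_sub_log_sub_two_mul_lt he_pos he_one
  rw [hform, div_lt_iff₀ (by positivity)]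
  refine ⟨div_pos (mul_pos he_sq (by linarith)) (by positivity), ?_⟩
  calc (1 - e ^ 2) * (log (1 + e) - log (1 - e) - 2 * e)
      < (1 - e ^ 2) * (2 / 3 * e ^ 3 / (1 - e ^ 2)) := by gcongr
    _ = 1 / 3 * (2 * e ^ 3) := by field_simp
end

section
/- For an oblate spheroid with eccentricity e ∈ (0,1), e² = 1 - b²/a², the form-factor L₁ = (1/e²)(1 - (√(1-e²)/e)·arcsin(e)) satisfies 1/3 < L₁ < 1. -/
/-!
Writing `s = √(1 - e²)`, one has `L₁ = (e - s arcsin e) / e³`, so the claim is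
`e - e³ < s arcsin e < e - e³/3`. Both bounds come from `e s ≤ e < arcsin e` (as `sin t < t`):
the first since `e - e³ = s · (e s)`, the second because `y (arcsin y - y √(1 - y²)) / √(1 - y²)`
is the derivative of `y - y³/3 - √(1 - y²) arcsin y`, which vanishes at `0`.
-/

open Real Set

lemma mul_sqrt_one_sub_sq_lt_arcsin {x : ℝ} (hx₀ : 0 < x) (hx₁ : x ≤ 1) :
    x * √(1 - x ^ 2) < arcsin x := by
  have hsin : x < arcsin x := by
    simpa [sin_arcsin (by linarith) hx₁] using sin_lt (arcsin_pos.2 hx₀)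
  have hs : √(1 - x ^ 2) ≤ 1 := sqrt_le_one.2 (by nlinarith)
  exact (mul_le_of_le_one_right hx₀.le hs).trans_lt hsin

lemma hasDerivAt_sqrt_one_sub_sq_mul_arcsin {x : ℝ} (hx₀ : -1 < x) (hx₁ : x < 1) :
    HasDerivAt (fun y => √(1 - y ^ 2) * arcsin y) (1 - x * arcsin x / √(1 - x ^ 2)) x := by
  have hs : 0 < √(1 - x ^ 2) := sqrt_pos.2 (by nlinarith)
  have hsqrt := ((hasDerivAt_pow 2 x).const_sub 1).sqrt (sqrt_pos.1 hs).ne'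
  refine (hsqrt.mul (hasDerivAt_arcsin hx₀.ne' hx₁.ne)).congr_deriv ?_
  field_simp
  ring

lemma sqrt_one_sub_sq_mul_arcsin_lt {x : ℝ} (hx₀ : 0 < x) (hx₁ : x ≤ 1) :
    √(1 - x ^ 2) * arcsin x < x - x ^ 3 / 3 := by
  let g : ℝ → ℝ := fun y => y - y ^ 3 / 3 - √(1 - y ^ 2) * arcsin y
  have hg : StrictMonoOn g (Icc 0 1) := by
    refine strictMonoOn_of_deriv_pos (convex_Icc 0 1) (by fun_prop) fun y hy => ?_
    rw [interior_Icc] at hy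
    have hs : 0 < √(1 - y ^ 2) := sqrt_pos.2 (by nlinarith [hy.1, hy.2])
    have hg' : HasDerivAt g (y * arcsin y / √(1 - y ^ 2) - y ^ 2) y :=
      (((hasDerivAt_id y).sub ((hasDerivAt_pow 3 y).div_const 3)).sub
        (hasDerivAt_sqrt_one_sub_sq_mul_arcsin (by linarith [hy.1]) hy.2)).congr_deriv
        (by norm_num)
    have hkey : y ^ 2 < y * arcsin y / √(1 - y ^ 2) := by
      rw [lt_div_iff₀ hs]
      nlinarith [mul_sqrt_one_sub_sq_lt_arcsin hy.1 hy.2.le, hy.1]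
    rw [hg'.deriv]
    linarith
  simpa [g] using hg ⟨le_rfl, zero_le_one⟩ ⟨hx₀.le, hx₁⟩ hx₀

lemma sub_pow_three_lt_sqrt_one_sub_sq_mul_arcsin {x : ℝ} (hx₀ : 0 < x) (hx₁ : x < 1) :
    x - x ^ 3 < √(1 - x ^ 2) * arcsin x := by
  have hs : 0 < √(1 - x ^ 2) := sqrt_pos.2 (by nlinarith)
  calc x - x ^ 3 = √(1 - x ^ 2) * (x * √(1 - x ^ 2)) := by
        rw [mul_left_comm, ← sq, sq_sqrt (by nlinarith)]
        ring
    _ < √(1 - x ^ 2) * arcsin x :=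
        mul_lt_mul_of_pos_left (mul_sqrt_one_sub_sq_lt_arcsin hx₀ hx₁.le) hs

/-- For an oblate spheroid with eccentricity `e ∈ (0,1)`, the form-factor
`L₁ = (1/e²)(1 - (√(1-e²)/e) arcsin e)` satisfies `1/3 < L₁ < 1`. -/
theorem oblate_form_factor_bounds (e : ℝ) (he₀ : 0 < e) (he₁ : e < 1) :
    1 / 3 < 1 / e ^ 2 * (1 - Real.sqrt (1 - e ^ 2) / e * Real.arcsin e) ∧
    1 / e ^ 2 * (1 - Real.sqrt (1 - e ^ 2) / e * Real.arcsin e) < 1 := by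
  have hL : 1 / e ^ 2 * (1 - √(1 - e ^ 2) / e * arcsin e) =
      (e - √(1 - e ^ 2) * arcsin e) / e ^ 3 := by
    field_simp
  have he₃ : 0 < e ^ 3 := by positivity
  rw [hL, lt_div_iff₀ he₃, div_lt_iff₀ he₃]
  constructor
  · linarith [sqrt_one_sub_sq_mul_arcsin_lt he₀ he₁.le]
  · linarith [sub_pow_three_lt_sqrt_one_sub_sq_mul_arcsin he₀ he₁]
end

section
/- The prolate spheroid form-factor L₁(e) = ((1-e²)/e²)(-1 + (1/(2e))ln((1+e)/(1-e))) is strictly decreasing on (0,1). -/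
/-!
Write `A(e) = log ((1 + e) / (1 - e))`, so that `A' = 2 / (1 - e²)`. The derivative of the
form factor is `(6e - (3 - e²) A(e)) / (2e⁴)`, so it suffices that `(3 - e²) A(e) > 6e` on
`(0, 1)`. Both sides vanish at `0`, and the derivative of their difference is
`2e (2e / (1 - e²) - A(e))`, which is positive by the cruder bound `A(e) < 2e / (1 - e²)`;
that bound holds in turn because both sides vanish at `0` and the derivative of their
difference is `4e² / (1 - e²)²`.
-/

open Real Set

lemma lt_of_hasDerivAt_pos {f f' : ℝ → ℝ} {a b x : ℝ}
    (hf : ∀ y ∈ Ico a b, HasDerivAt f (f' y) y) (hf' : ∀ y ∈ Ioo a b, 0 < f' y)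
    (hx : x ∈ Ioo a b) : f a < f x := by
  have hmono : StrictMonoOn f (Ico a b) := by
    refine strictMonoOn_of_hasDerivWithinAt_pos (f' := f') (convex_Ico a b)
      (fun y hy => (hf y hy).continuousAt.continuousWithinAt) (fun y hy => ?_) ?_
    · rw [interior_Ico] at hy ⊢
      exact (hf y (Ioo_subset_Ico_self hy)).hasDerivWithinAt
    · simpa only [interior_Ico] using hf'
  exact hmono (left_mem_Ico.2 (hx.1.trans hx.2)) (Ioo_subset_Ico_self hx) hx.1

lemma hasDerivAt_log_one_add_div_one_sub {x : ℝ} (hx : x ∈ Ioo (-1) 1) :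
    HasDerivAt (fun y => log ((1 + y) / (1 - y))) (2 / (1 - x ^ 2)) x := by
  have hp : 1 + x ≠ 0 := by linarith [hx.1]
  have hm : 1 - x ≠ 0 := by linarith [hx.2]
  have hpm : 1 - x ^ 2 ≠ 0 := by nlinarith [hx.1, hx.2]
  have h := (((hasDerivAt_id' x).const_add 1).fun_div ((hasDerivAt_id' x).const_sub 1) hm).log
    (div_ne_zero hp hm)
  refine h.congr_deriv ?_
  field_simp
  ring

lemma log_one_add_div_one_sub_lt {x : ℝ} (hx : x ∈ Ioo 0 1) :
    log ((1 + x) / (1 - x)) < 2 * x / (1 - x ^ 2) := by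
  suffices 0 < 2 * x / (1 - x ^ 2) - log ((1 + x) / (1 - x)) by linarith
  refine lt_of_hasDerivAt_pos (f := fun y => 2 * y / (1 - y ^ 2) - log ((1 + y) / (1 - y)))
    (f' := fun y => 4 * y ^ 2 / (1 - y ^ 2) ^ 2) (fun y hy => ?_) (fun y hy => ?_) hx
    |>.trans_eq' (by simp)
  · have hy' : 1 - y ^ 2 ≠ 0 := by nlinarith [hy.1, hy.2]
    have h := (((hasDerivAt_id' y).const_mul 2).fun_div ((hasDerivAt_pow 2 y).const_sub 1) hy').fun_sub
      (hasDerivAt_log_one_add_div_one_sub ⟨by linarith [hy.1], hy.2⟩)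
    refine h.congr_deriv ?_
    field_simp
    ring
  · have hy0 := hy.1
    have hy1 : 0 < 1 - y ^ 2 := by nlinarith [hy.1, hy.2]
    positivity

lemma six_mul_lt_three_sub_sq_mul_log {x : ℝ} (hx : x ∈ Ioo 0 1) :
    6 * x < (3 - x ^ 2) * log ((1 + x) / (1 - x)) := by
  suffices 0 < (3 - x ^ 2) * log ((1 + x) / (1 - x)) - 6 * x by linarith
  refine lt_of_hasDerivAt_pos (f := fun y => (3 - y ^ 2) * log ((1 + y) / (1 - y)) - 6 * y)
    (f' := fun y => 2 * y * (2 * y / (1 - y ^ 2) - log ((1 + y) / (1 - y))))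
    (fun y hy => ?_) (fun y hy => ?_) hx |>.trans_eq' (by simp)
  · have hy' : 1 - y ^ 2 ≠ 0 := by nlinarith [hy.1, hy.2]
    have h := (((hasDerivAt_pow 2 y).const_sub 3).fun_mul
      (hasDerivAt_log_one_add_div_one_sub ⟨by linarith [hy.1], hy.2⟩)).fun_sub
      ((hasDerivAt_id' y).const_mul 6)
    refine h.congr_deriv ?_
    field_simp
    ring
  · exact mul_pos (by linarith [hy.1]) (sub_pos.2 (log_one_add_div_one_sub_lt hy))

lemma hasDerivAt_prolate_form_factor {x : ℝ} (hx : x ∈ Ioo 0 1) :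
    HasDerivAt
      (fun e : ℝ => (1 - e ^ 2) / e ^ 2 * (-1 + 1 / (2 * e) * log ((1 + e) / (1 - e))))
      ((6 * x - (3 - x ^ 2) * log ((1 + x) / (1 - x))) / (2 * x ^ 4)) x := by
  have hx0 : x ≠ 0 := hx.1.ne'
  have hx1 : 1 - x ^ 2 ≠ 0 := by nlinarith [hx.1, hx.2]
  have hsq := hasDerivAt_pow 2 x
  have hinv := (hasDerivAt_const x (1 : ℝ)).fun_div ((hasDerivAt_id' x).const_mul 2) (by simpa)
  have h := ((hsq.const_sub 1).fun_div hsq (pow_ne_zero 2 hx0)).fun_mul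
    ((hinv.fun_mul (hasDerivAt_log_one_add_div_one_sub ⟨by linarith [hx.1], hx.2⟩)).const_add (-1))
  refine h.congr_deriv ?_
  field_simp
  ring

/-- The prolate spheroid form-factor is strictly decreasing on `(0,1)`. -/
theorem prolate_form_factor_strictAntiOn :
    StrictAntiOn
      (fun e : ℝ => (1 - e ^ 2) / e ^ 2 * (-1 + 1 / (2 * e) * Real.log ((1 + e) / (1 - e))))
      (Set.Ioo 0 1) := by
  refine strictAntiOn_of_hasDerivWithinAt_neg (convex_Ioo 0 1)
    (f' := fun x => (6 * x - (3 - x ^ 2) * log ((1 + x) / (1 - x))) / (2 * x ^ 4))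
    (fun x hx => (hasDerivAt_prolate_form_factor hx).continuousAt.continuousWithinAt)
    (fun x hx => ?_) (fun x hx => ?_)
  · rw [interior_Ioo] at hx ⊢
    exact (hasDerivAt_prolate_form_factor hx).hasDerivWithinAt
  · rw [interior_Ioo] at hx
    have hx0 := hx.1
    exact div_neg_of_neg_of_pos (by linarith [six_mul_lt_three_sub_sq_mul_log hx]) (by positivity)
end

section
/- The polarizability per unit material volume of a hollow sphere, ᾱ(f) = 3(m²-1)(2m²+1)/((m²+2)(2m²+1) - 2(m²-1)²f), with vacuum volume fraction f ∈ [0,1), can be written as a weighted sum of two ellipsoid-type terms: ᾱ(f) = w₁·(m²-1)/(1+L₁(m²-1)) + w₂·(m²-1)/(1+L₂(m²-1)), where L₁ = 1/2 - √(8f+1)/6, L₂ = 1/2 + √(8f+1)/6, w₁ = 1/2 + 1/(2√(8f+1)), w₂ = 1/2 - 1/(2√(8f+1)). -/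
/-!
With `x = m² - 1` and `s = √(8f+1)`, the form factors satisfy `L₁ + L₂ = 1` and
`L₁ L₂ = (9 - s²)/36 = 2(1 - f)/9`, so the denominator `(x + 3)(2x + 3) - 2x²f` factors as
`9 (1 + L₁x)(1 + L₂x)`. The decomposition is then the partial-fraction expansion of
`3x(2x + 3) / (9 (1 + L₁x)(1 + L₂x))`.
-/

theorem hollowSphere_denominator_eq {K : Type*} [Field K] [CharZero K] {f s : K}
    (hs : s ^ 2 = 8 * f + 1) (z : K) :
    (z + 2) * (2 * z + 1) - 2 * (z - 1) ^ 2 * f =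
      9 * ((1 + (1 / 2 - s / 6) * (z - 1)) * (1 + (1 / 2 + s / 6) * (z - 1))) := by
  linear_combination ((z - 1) ^ 2 / 4) * hs

theorem hollowSphere_partialFraction {K : Type*} [Field K] [CharZero K] {f s z : K}
    (hs0 : s ≠ 0) (hs : s ^ 2 = 8 * f + 1)
    (h₁ : 1 + (1 / 2 - s / 6) * (z - 1) ≠ 0) (h₂ : 1 + (1 / 2 + s / 6) * (z - 1) ≠ 0) :
    3 * (z - 1) * (2 * z + 1) / ((z + 2) * (2 * z + 1) - 2 * (z - 1) ^ 2 * f) =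
      (1 / 2 + 1 / (2 * s)) * (z - 1) / (1 + (1 / 2 - s / 6) * (z - 1)) +
        (1 / 2 - 1 / (2 * s)) * (z - 1) / (1 + (1 / 2 + s / 6) * (z - 1)) := by
  rw [hollowSphere_denominator_eq hs, div_add_div _ _ h₁ h₂,
    div_eq_div_iff (mul_ne_zero (by norm_num) (mul_ne_zero h₁ h₂)) (mul_ne_zero h₁ h₂)]
  field_simp
  ring

theorem hollow_sphere_polarizability_decomposition_general (m : ℂ) (f : ℝ)
    (hf0 : 0 ≤ f)
    (h1 : 1 + ((1 / 2 - Real.sqrt (8 * f + 1) / 6 : ℝ) : ℂ) * (m ^ 2 - 1) ≠ 0)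
    (h2 : 1 + ((1 / 2 + Real.sqrt (8 * f + 1) / 6 : ℝ) : ℂ) * (m ^ 2 - 1) ≠ 0) :
    3 * (m ^ 2 - 1) * (2 * m ^ 2 + 1) /
        ((m ^ 2 + 2) * (2 * m ^ 2 + 1) - 2 * (m ^ 2 - 1) ^ 2 * (f : ℂ)) =
      ((1 / 2 + 1 / (2 * Real.sqrt (8 * f + 1)) : ℝ) : ℂ) * (m ^ 2 - 1) /
          (1 + ((1 / 2 - Real.sqrt (8 * f + 1) / 6 : ℝ) : ℂ) * (m ^ 2 - 1)) +
        ((1 / 2 - 1 / (2 * Real.sqrt (8 * f + 1)) : ℝ) : ℂ) * (m ^ 2 - 1) /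
          (1 + ((1 / 2 + Real.sqrt (8 * f + 1) / 6 : ℝ) : ℂ) * (m ^ 2 - 1)) := by
  have hpos : (0 : ℝ) < 8 * f + 1 := by linarith
  have hs0 : ((Real.sqrt (8 * f + 1) : ℝ) : ℂ) ≠ 0 := by exact_mod_cast (Real.sqrt_pos.2 hpos).ne'
  have hs : ((Real.sqrt (8 * f + 1) : ℝ) : ℂ) ^ 2 = 8 * (f : ℂ) + 1 := by
    exact_mod_cast Real.sq_sqrt hpos.le
  push_cast at h1 h2 ⊢
  exact hollowSphere_partialFraction hs0 hs h1 h2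

/-- The hollow-sphere polarizability per unit volume decomposes into two ellipsoid-type
terms with form-factors `L₁ = 1/2 - √(8f+1)/6`, `L₂ = 1/2 + √(8f+1)/6` and weights
`w₁ = 1/2 + 1/(2√(8f+1))`, `w₂ = 1/2 - 1/(2√(8f+1))`. -/
theorem hollow_sphere_polarizability_decomposition (m : ℂ) (f : ℝ)
    (hf0 : 0 ≤ f) (hf1 : f < 1)
    (hden : (m ^ 2 + 2) * (2 * m ^ 2 + 1) - 2 * (m ^ 2 - 1) ^ 2 * (f : ℂ) ≠ 0)
    (h1 : 1 + ((1 / 2 - Real.sqrt (8 * f + 1) / 6 : ℝ) : ℂ) * (m ^ 2 - 1) ≠ 0)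
    (h2 : 1 + ((1 / 2 + Real.sqrt (8 * f + 1) / 6 : ℝ) : ℂ) * (m ^ 2 - 1) ≠ 0) :
    3 * (m ^ 2 - 1) * (2 * m ^ 2 + 1) /
        ((m ^ 2 + 2) * (2 * m ^ 2 + 1) - 2 * (m ^ 2 - 1) ^ 2 * (f : ℂ)) =
      ((1 / 2 + 1 / (2 * Real.sqrt (8 * f + 1)) : ℝ) : ℂ) * (m ^ 2 - 1) /
          (1 + ((1 / 2 - Real.sqrt (8 * f + 1) / 6 : ℝ) : ℂ) * (m ^ 2 - 1)) +
        ((1 / 2 - 1 / (2 * Real.sqrt (8 * f + 1)) : ℝ) : ℂ) * (m ^ 2 - 1) /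
          (1 + ((1 / 2 + Real.sqrt (8 * f + 1) / 6 : ℝ) : ℂ) * (m ^ 2 - 1)) :=
  hollow_sphere_polarizability_decomposition_general m f hf0 h1 h2
end

section
/- For the DHS, uniformly averaging over f ∈ [0,1) the measure w₁(f)δ_{L₁(f)} + w₂(f)δ_{L₂(f)}, with L₁ = 1/2-√(8f+1)/6, L₂ = 1/2+√(8f+1)/6, w₁ = 1/2+1/(2√(8f+1)), w₂ = 1/2-1/(2√(8f+1)), yields the density P(L) = (3/2)|2-3L| on [0,1/3]∪[2/3,1]: i.e. for any continuous g on [0,1], ∫₀¹ [w₁(f)g(L₁(f)) + w₂(f)g(L₂(f))] df = ∫_{[0,1/3]∪[2/3,1]} g(L)·(3/2)|2-3L| dL. -/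
open MeasureTheory Set intervalIntegral

/-!
Substituting `s = √(8f+1)` (so `df = s/4 ds`, `s ∈ [1,3]`) turns the weights into
`w₁ df = (s+1)/8 ds` and `w₂ df = (s-1)/8 ds`. The affine substitutions `L = 1/2 ∓ s/6` then map
`[1,3]` onto `[0,1/3]` and `[2/3,1]`, where `(3/2)|2-3L|` equals `3(s+1)/4` and `3(s-1)/4`
respectively, so each weighted contribution is exactly the density integral on its piece.
-/

theorem sqrt_eight_mul_add_one_mem_Icc {f : ℝ} (hf : f ∈ Icc (0 : ℝ) 1) :
    √(8 * f + 1) ∈ Icc (1 : ℝ) 3 := by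
  constructor
  · exact Real.one_le_sqrt.mpr (by linarith [hf.1])
  · exact Real.sqrt_le_iff.mpr ⟨by norm_num, by linarith [hf.2]⟩

theorem integral_comp_sqrt_eight_mul_add_one {k : ℝ → ℝ} (hk : ContinuousOn k (Icc 1 3)) :
    ∫ f in (0 : ℝ)..1, k √(8 * f + 1) * (4 / √(8 * f + 1)) = ∫ s in (1 : ℝ)..3, k s := by
  have hpos : ∀ f ∈ uIcc (0 : ℝ) 1, 0 < 8 * f + 1 := fun f hf => by
    rw [uIcc_of_le zero_le_one] at hf
    linarith [hf.1]
  have hderiv : ∀ f ∈ uIcc (0 : ℝ) 1,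
      HasDerivAt (fun f => √(8 * f + 1)) (4 / √(8 * f + 1)) f := fun f hf => by
    convert (((hasDerivAt_id' f).const_mul 8).add_const 1).sqrt (hpos f hf).ne' using 1
    ring
  have hmaps : (fun f => √(8 * f + 1)) '' uIcc 0 1 ⊆ Icc 1 3 := by
    rw [uIcc_of_le zero_le_one]
    rintro _ ⟨f, hf, rfl⟩
    exact sqrt_eight_mul_add_one_mem_Icc hf
  have hcont : ContinuousOn (fun f => 4 / √(8 * f + 1)) (uIcc 0 1) :=
    continuousOn_const.div (by fun_prop) fun f hf => (Real.sqrt_pos.mpr (hpos f hf)).ne'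
  have h9 : √(9 : ℝ) = 3 := by
    rw [show (9 : ℝ) = 3 ^ 2 by norm_num, Real.sqrt_sq (by norm_num)]
  have hsubst := integral_comp_mul_deriv' hderiv hcont (hk.mono hmaps)
  norm_num [h9] at hsubst
  exact hsubst

theorem setIntegral_Icc_union_Icc {E : Type*} [NormedAddCommGroup E] [NormedSpace ℝ E]
    {f : ℝ → E} {a b c d : ℝ} (hab : a ≤ b) (hbc : b < c) (hcd : c ≤ d)
    (hf₁ : IntegrableOn f (Icc a b)) (hf₂ : IntegrableOn f (Icc c d)) :
    ∫ x in Icc a b ∪ Icc c d, f x = (∫ x in a..b, f x) + ∫ x in c..d, f x := by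
  have hdisj : Disjoint (Icc a b) (Icc c d) :=
    disjoint_left.mpr fun _ hx₁ hx₂ => absurd (hx₁.2.trans_lt hbc) (not_lt.mpr hx₂.1)
  rw [setIntegral_union hdisj measurableSet_Icc hf₁ hf₂, integral_of_le hab, integral_of_le hcd,
    integral_Icc_eq_integral_Ioc, integral_Icc_eq_integral_Ioc]

theorem dhs_weights_eq_density (g : ℝ → ℝ) {s : ℝ} (hs : 1 ≤ s) :
    (1 / 2 + 1 / (2 * s)) * g (1 / 2 - s / 6) + (1 / 2 - 1 / (2 * s)) * g (1 / 2 + s / 6) =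
      (g (1 / 2 - s / 6) * (3 / 2 * |2 - 3 * (1 / 2 - s / 6)|) +
        g (1 / 2 + s / 6) * (3 / 2 * |2 - 3 * (1 / 2 + s / 6)|)) / 6 * (4 / s) := by
  rw [abs_of_nonneg (by linarith), abs_of_nonpos (by linarith)]
  field_simp
  ring

/-- Uniformly averaging over `f ∈ [0,1)` the two weighted form-factor contributions of a
hollow sphere yields the DHS density `(3/2)|2-3L|` on `[0,1/3] ∪ [2/3,1]`: for any `g`
continuous on `[0,1]`,
`∫₀¹ (w₁(f) g(L₁(f)) + w₂(f) g(L₂(f))) df = ∫_{[0,1/3]∪[2/3,1]} g(L) (3/2)|2-3L| dL`. -/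
theorem dhs_averaging_identity (g : ℝ → ℝ) (hg : ContinuousOn g (Set.Icc (0 : ℝ) 1)) :
    ∫ f in (0 : ℝ)..1,
        ((1 / 2 + 1 / (2 * Real.sqrt (8 * f + 1))) * g (1 / 2 - Real.sqrt (8 * f + 1) / 6) +
          (1 / 2 - 1 / (2 * Real.sqrt (8 * f + 1))) * g (1 / 2 + Real.sqrt (8 * f + 1) / 6)) =
      ∫ L in Set.Icc (0 : ℝ) (1 / 3) ∪ Set.Icc (2 / 3 : ℝ) 1,
        g L * (3 / 2 * |2 - 3 * L|) := by
  set G : ℝ → ℝ := fun L => g L * (3 / 2 * |2 - 3 * L|)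
  have hG : ContinuousOn G (Icc 0 1) := hg.mul (by fun_prop)
  have hG₁ : ContinuousOn (fun s => G (1 / 2 - s / 6)) (Icc 1 3) :=
    hG.comp (by fun_prop) fun s hs => ⟨by linarith [hs.2], by linarith [hs.1]⟩
  have hG₂ : ContinuousOn (fun s => G (1 / 2 + s / 6)) (Icc 1 3) :=
    hG.comp (by fun_prop) fun s hs => ⟨by linarith [hs.1], by linarith [hs.2]⟩
  calc _ = ∫ f in (0 : ℝ)..1,
        (G (1 / 2 - √(8 * f + 1) / 6) + G (1 / 2 + √(8 * f + 1) / 6)) / 6 * (4 / √(8 * f + 1)) :=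
        integral_congr fun f hf => dhs_weights_eq_density g
          (sqrt_eight_mul_add_one_mem_Icc (by rwa [uIcc_of_le zero_le_one] at hf)).1
    _ = ∫ s in (1 : ℝ)..3, (G (1 / 2 - s / 6) + G (1 / 2 + s / 6)) / 6 :=
        integral_comp_sqrt_eight_mul_add_one ((hG₁.add hG₂).div_const 6)
    _ = ((∫ s in (1 : ℝ)..3, G (1 / 2 - s / 6)) + ∫ s in (1 : ℝ)..3, G (1 / 2 + s / 6)) / 6 := by
        rw [intervalIntegral.integral_div, intervalIntegral.integral_add]
        · exact hG₁.intervalIntegrable_of_Icc (by norm_num)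
        · exact hG₂.intervalIntegrable_of_Icc (by norm_num)
    _ = (∫ L in (0 : ℝ)..1 / 3, G L) + ∫ L in (2 / 3 : ℝ)..1, G L := by
        rw [integral_comp_sub_div _ (by norm_num), integral_comp_add_div _ (by norm_num)]
        norm_num
        ring
    _ = _ := (setIntegral_Icc_union_Icc (by norm_num) (by norm_num) (by norm_num)
        ((hG.mono (Icc_subset_Icc_right (by norm_num))).integrableOn_Icc)
        ((hG.mono (Icc_subset_Icc_left (by norm_num))).integrableOn_Icc)).symm
end
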